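/- arXiv:1808.06705 — 2 statements merged into one kernel-verified Lean document; each statement's English description precedes it below -/
import Mathlib

section
/- In the label propagation algorithm, if a directed edge (v,u) exists at some step, then vertices v and u remain connected (in the undirected sense, via existing edges) at every subsequent step. -/
/-- One step of edge replacement: label propagation `(v,u) ↦ (u, L v)` when `u ≠ L v`,
symmetrization `(v,u) ↦ (u,v)` when `u = L v`. -/
def stepEdges (L : ℕ → ℕ) (E : Multiset (ℕ × ℕ)) : Multiset (ℕ × ℕ) :=
  E.map (fun e => if e.2 = L e.1 then (e.2, e.1) else (e.2, L e.1))

/-- One step of label update: `L' u = min (L u) (min of L v over edges (v,u) with u ≠ L v)`. -/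
def stepLabels (L : ℕ → ℕ) (E : Multiset (ℕ × ℕ)) : ℕ → ℕ :=
  fun u =>
    ((E.filter (fun e => e.2 = u ∧ e.2 ≠ L e.1)).map (fun e => L e.1)).fold min (L u)

/-- One full step of the label propagation algorithm. -/
def lpStep (s : Multiset (ℕ × ℕ) × (ℕ → ℕ)) : Multiset (ℕ × ℕ) × (ℕ → ℕ) :=
  (stepEdges s.2 s.1, stepLabels s.2 s.1)

/-- Initial labels: the minimum of the closed neighborhood of `v`. -/
def initLabels (E₀ : Finset (ℕ × ℕ)) (v : ℕ) : ℕ :=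
  (insert v ((E₀.filter (fun e => e.1 = v)).image Prod.snd)).min' (Finset.insert_nonempty _ _)

/-- The state (edge multiset, label array) after `k` steps of the algorithm on
initial (directed) edge set `E₀`. -/
def lpRun (E₀ : Finset (ℕ × ℕ)) (k : ℕ) : Multiset (ℕ × ℕ) × (ℕ → ℕ) :=
  lpStep^[k] (E₀.val, initLabels E₀)

/-- Undirected connectivity via the edges of a directed edge multiset. -/
def EdgeConn (E : Multiset (ℕ × ℕ)) (v u : ℕ) : Prop :=
  Relation.ReflTransGen (fun a b => (a, b) ∈ E ∨ (b, a) ∈ E) v u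

/-- `E₀` is symmetric (both orientations of each undirected edge are present). -/
def IsSym (E₀ : Finset (ℕ × ℕ)) : Prop := ∀ v u : ℕ, (v, u) ∈ E₀ → (u, v) ∈ E₀

/-- `E₀` has no loop edges. -/
def Loopless (E₀ : Finset (ℕ × ℕ)) : Prop := ∀ v : ℕ, (v, v) ∉ E₀

/-!
Every label `L x` is at most `x`, and a vertex `x` with `L x ≠ x` is always joined to `L x`
by a current edge, in one orientation or the other. Under this invariant, after one step every
vertex `x` is connected to its old label: the edge between `x` and `L x` becomes `(x, L x)` or
`(x, L (L x))`, and `L x < x` is connected to `L (L x)` by strong induction on the vertex.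
Consequently an edge `(v, u)`, which becomes `(u, v)` or `(u, L v)`, still connects `v` and `u`
one step later, and so does every path of edges.
-/

open Relation

namespace Multiset

variable {α : Type*} [LinearOrder α]

theorem le_fold_min {s : Multiset α} {b c : α} :
    c ≤ s.fold min b ↔ c ≤ b ∧ ∀ x ∈ s, c ≤ x := by
  induction s using Multiset.induction with
  | empty => simp
  | cons a s ih => simp only [fold_cons_left, le_min_iff, ih, mem_cons, forall_eq_or_imp]; tauto

theorem fold_min_eq_or_mem (s : Multiset α) (b : α) :
    s.fold min b = b ∨ s.fold min b ∈ s := by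
  induction s using Multiset.induction with
  | empty => simp
  | cons a s ih =>
    rw [fold_cons_left]
    rcases min_choice a (s.fold min b) with h | h <;> rw [h]
    · exact .inr (mem_cons_self a s)
    · exact ih.imp_right mem_cons_of_mem

end Multiset

namespace EdgeConn

variable {E : Multiset (ℕ × ℕ)} {a b c : ℕ}

theorem refl : EdgeConn E a a := ReflTransGen.refl

theorem of_mem (h : (a, b) ∈ E) : EdgeConn E a b := .single (.inl h)

theorem of_swap_mem (h : (b, a) ∈ E) : EdgeConn E a b := .single (.inr h)

theorem trans (hab : EdgeConn E a b) (hbc : EdgeConn E b c) : EdgeConn E a c :=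
  ReflTransGen.trans hab hbc

theorem symm (h : EdgeConn E a b) : EdgeConn E b a := by
  induction h with
  | refl => exact refl
  | tail _ hbc ih => exact ReflTransGen.head hbc.symm ih

theorem of_forall_mem {E' : Multiset (ℕ × ℕ)} (hE : ∀ a b, (a, b) ∈ E → EdgeConn E' a b)
    (h : EdgeConn E a b) : EdgeConn E' a b := by
  induction h with
  | refl => exact refl
  | tail _ hbc ih => exact ih.trans (hbc.elim (hE _ _) fun hcb => (hE _ _ hcb).symm)

end EdgeConn

def LabelsLinked (L : ℕ → ℕ) (E : Multiset (ℕ × ℕ)) : Prop :=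
  ∀ x, L x = x ∨ (x, L x) ∈ E ∨ (L x, x) ∈ E

section Step

variable {L : ℕ → ℕ} {E : Multiset (ℕ × ℕ)}

theorem mem_stepEdges_of_eq {v u : ℕ} (h : (v, u) ∈ E) (hu : u = L v) :
    (u, v) ∈ stepEdges L E :=
  Multiset.mem_map.2 ⟨(v, u), h, if_pos hu⟩

theorem mem_stepEdges_of_ne {v u : ℕ} (h : (v, u) ∈ E) (hu : u ≠ L v) :
    (u, L v) ∈ stepEdges L E :=
  Multiset.mem_map.2 ⟨(v, u), h, if_neg hu⟩

theorem stepLabels_le (u : ℕ) : stepLabels L E u ≤ L u :=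
  (Multiset.le_fold_min.1 le_rfl).1

theorem stepLabels_le_of_mem {v u : ℕ} (h : (v, u) ∈ E) (hu : u ≠ L v) :
    stepLabels L E u ≤ L v :=
  (Multiset.le_fold_min.1 le_rfl).2 _
    (Multiset.mem_map_of_mem _ (Multiset.mem_filter.2 ⟨h, rfl, hu⟩))

theorem stepLabels_eq_or_exists (u : ℕ) :
    stepLabels L E u = L u ∨ ∃ v, (v, u) ∈ E ∧ u ≠ L v ∧ stepLabels L E u = L v := by
  refine (Multiset.fold_min_eq_or_mem _ _).imp_right fun h => ?_
  obtain ⟨⟨v, u'⟩, hfilter, hv⟩ := Multiset.mem_map.1 h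
  obtain ⟨he, rfl, hu⟩ := Multiset.mem_filter.1 hfilter
  exact ⟨v, he, hu, hv.symm⟩

theorem LabelsLinked.stepLabels (hdec : ∀ x, L x ≤ x) (hlink : LabelsLinked L E) :
    LabelsLinked (stepLabels L E) (stepEdges L E) := by
  intro x
  rcases stepLabels_eq_or_exists (L := L) (E := E) x with hx | ⟨v, hv, hne, hx⟩ <;> rw [hx]
  · rcases hlink x with hfix | hfwd | hbwd
    · exact .inl hfix
    · exact .inr (.inr (mem_stepEdges_of_eq hfwd rfl))
    · by_cases hsym : x = L (L x)
      · exact .inr (.inl (mem_stepEdges_of_eq hbwd hsym))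
      -- `L x` is the new label, hence at most `L (L x)`
      have hLL : L (L x) = L x :=
        le_antisymm (hdec _) (hx.symm.trans_le (stepLabels_le_of_mem hbwd hsym))
      exact .inr (.inl (hLL ▸ mem_stepEdges_of_ne hbwd hsym))
  · exact .inr (.inl (mem_stepEdges_of_ne hv hne))

theorem LabelsLinked.edgeConn_stepEdges_label (hdec : ∀ x, L x ≤ x)
    (hlink : LabelsLinked L E) (x : ℕ) : EdgeConn (stepEdges L E) x (L x) := by
  induction x using Nat.strong_induction_on with
  | _ x ih =>
  rcases hlink x with hfix | hfwd | hbwd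
  · rw [hfix]; exact .refl
  · exact .of_swap_mem (mem_stepEdges_of_eq hfwd rfl)
  · by_cases hsym : x = L (L x)
    · exact .of_mem (mem_stepEdges_of_eq hbwd hsym)
    have hlt : L x < x := (hdec x).lt_of_ne fun h => hsym (by rw [h, h])
    exact (EdgeConn.of_mem (mem_stepEdges_of_ne hbwd hsym)).trans (ih _ hlt).symm

theorem LabelsLinked.edgeConn_stepEdges (hdec : ∀ x, L x ≤ x) (hlink : LabelsLinked L E)
    {v u : ℕ} (h : EdgeConn E v u) : EdgeConn (stepEdges L E) v u := by
  refine h.of_forall_mem fun a b hab => ?_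
  by_cases hb : b = L a
  · exact .of_swap_mem (mem_stepEdges_of_eq hab hb)
  · exact (hlink.edgeConn_stepEdges_label hdec a).trans
      (EdgeConn.of_mem (mem_stepEdges_of_ne hab hb)).symm

end Step

theorem lpRun_succ (E₀ : Finset (ℕ × ℕ)) (k : ℕ) :
    lpRun E₀ (k + 1) = lpStep (lpRun E₀ k) :=
  Function.iterate_succ_apply' _ _ _

theorem lpRun_labels_le (E₀ : Finset (ℕ × ℕ)) (k x : ℕ) : (lpRun E₀ k).2 x ≤ x := by
  induction k with
  | zero => exact Finset.min'_le _ x (Finset.mem_insert_self x _)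
  | succ k ih => rw [lpRun_succ]; exact (stepLabels_le x).trans ih

theorem labelsLinked_initLabels (E₀ : Finset (ℕ × ℕ)) :
    LabelsLinked (initLabels E₀) E₀.val := by
  intro x
  rcases Finset.mem_insert.1 (Finset.min'_mem (insert x _) (Finset.insert_nonempty _ _)) with
    h | h
  · exact .inl h
  · obtain ⟨⟨x', y⟩, hfilter, hy⟩ := Finset.mem_image.1 h
    obtain ⟨he, rfl⟩ := Finset.mem_filter.1 hfilter
    refine .inr (.inl ?_)
    rw [initLabels, ← hy]
    exact he

theorem labelsLinked_lpRun (E₀ : Finset (ℕ × ℕ)) (k : ℕ) :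
    LabelsLinked (lpRun E₀ k).2 (lpRun E₀ k).1 := by
  induction k with
  | zero => exact labelsLinked_initLabels E₀
  | succ k ih => rw [lpRun_succ]; exact ih.stepLabels (lpRun_labels_le E₀ k)

theorem EdgeConn.lpRun_succ {E₀ : Finset (ℕ × ℕ)} {k v u : ℕ}
    (h : EdgeConn (lpRun E₀ k).1 v u) : EdgeConn (lpRun E₀ (k + 1)).1 v u := by
  rw [_root_.lpRun_succ]
  exact (labelsLinked_lpRun E₀ k).edgeConn_stepEdges (lpRun_labels_le E₀ k) h

theorem edge_implies_connected_forever_general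
    (E₀ : Finset (ℕ × ℕ)) (k : ℕ) (v u : ℕ) (h : (v, u) ∈ (lpRun E₀ k).1) :
    ∀ j : ℕ, k ≤ j → EdgeConn (lpRun E₀ j).1 v u := by
  intro j hj
  induction j, hj using Nat.le_induction with
  | base => exact .of_mem h
  | succ n _ ih => exact ih.lpRun_succ

/-- If a directed edge `(v,u)` exists at some step `k` of the label
propagation algorithm (run on a loopless symmetric initial edge set), then `v` and `u`
remain connected, in the undirected sense via the current edges, at every subsequent step. -/
theorem edge_implies_connected_forever
    (E₀ : Finset (ℕ × ℕ)) (hsym : IsSym E₀) (hloop : Loopless E₀)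
    (k : ℕ) (v u : ℕ) (h : (v, u) ∈ (lpRun E₀ k).1) :
    ∀ j : ℕ, k ≤ j → EdgeConn (lpRun E₀ j).1 v u :=
  edge_implies_connected_forever_general E₀ k v u h
end

section
/- On the sequentially labeled path graph with n vertices, the label propagation algorithm converges (all vertices have label 1) within ⌈log_φ n⌉ + O(1) steps, where φ = (1+√5)/2 is the golden ratio; in particular convergence takes O(log n) steps. -/
/-- The sequentially labeled path graph on vertices `1, …, n`, with both orientations of
each edge `{i, i+1}`. -/
def pathEdges (n : ℕ) : Finset (ℕ × ℕ) :=
  ((Finset.Ico 1 n).image fun i => (i, i + 1)) ∪ ((Finset.Ico 1 n).image fun i => (i + 1, i))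

/-!
After `k` steps on the path, the edges are, for each vertex `2 ≤ v ≤ n`, one from `v` to
`max 1 (v - F_{k+1})`, which is also the label of `v`, and one into `v` from `max 1 (v - F_k)`
(with `F_k = Nat.fib (k + 1)`). A step turns the offsets `(a, b)` into `(b, a + b)`: the
edge to the label is merely reversed, while the edge from `max 1 (v - a)` is replaced by the
label of that source, `b` further to the left. Hence the labels after `k` steps are
`max 1 (v - Nat.fib (k + 2))`, and they are all `1` as soon as `n ≤ φ ^ k ≤ Nat.fib (k + 2)`.
-/

open Real goldenRatio

def pathEdgesAt (n a b : ℕ) : Multiset (ℕ × ℕ) :=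
  (Finset.Icc 2 n).val.map (fun v => (max 1 (v - a), v)) +
    (Finset.Icc 2 n).val.map (fun v => (v, max 1 (v - b)))

-- Vertices outside `1, …, n`, such as `0`, are isolated and keep their initial label `v`.
def pathLabelsAt (n b v : ℕ) : ℕ :=
  if 1 ≤ v ∧ v ≤ n then max 1 (v - b) else v

section PathState

variable {n a b : ℕ}

theorem pathLabelsAt_of_le {v : ℕ} (hv : 1 ≤ v) (hvn : v ≤ n) :
    pathLabelsAt n b v = max 1 (v - b) :=
  if_pos ⟨hv, hvn⟩

theorem stepEdges_pathEdgesAt (ha : 1 ≤ a) :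
    stepEdges (pathLabelsAt n b) (pathEdgesAt n a b) = pathEdgesAt n b (a + b) := by
  rw [stepEdges, pathEdgesAt, pathEdgesAt, Multiset.map_add, Multiset.map_map,
    Multiset.map_map, add_comm]
  congr 1 <;> refine Multiset.map_congr rfl fun v hv => ?_ <;>
    simp only [Finset.mem_val, Finset.mem_Icc] at hv
  · simp only [Function.comp_apply, pathLabelsAt_of_le (by omega) hv.2, if_true]
  · have hlabel : pathLabelsAt n b (max 1 (v - a)) = max 1 (v - (a + b)) := by
      rw [pathLabelsAt_of_le (le_max_left _ _) (by omega)]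
      omega
    simp only [Function.comp_apply, hlabel]
    rw [if_neg (by omega)]

theorem stepLabels_pathEdgesAt (ha : 1 ≤ a) :
    stepLabels (pathLabelsAt n b) (pathEdgesAt n a b) = pathLabelsAt n (a + b) := by
  funext u
  have hfilter : (pathEdgesAt n a b).filter (fun e => e.2 = u ∧ e.2 ≠ pathLabelsAt n b e.1) =
      ((Finset.Icc 2 n).filter (· = u)).val.map (fun v => (max 1 (v - a), v)) := by
    have hback : ((Finset.Icc 2 n).val.map fun v => (v, max 1 (v - b))).filter
        (fun e => e.2 = u ∧ e.2 ≠ pathLabelsAt n b e.1) = 0 := by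
      refine Multiset.filter_eq_nil.2 fun e he => ?_
      obtain ⟨v, hv, rfl⟩ := Multiset.mem_map.1 he
      rw [Finset.mem_val, Finset.mem_Icc] at hv
      simp [pathLabelsAt_of_le (by omega) hv.2]
    rw [pathEdgesAt, Multiset.filter_add, hback, add_zero, Multiset.filter_map,
      Finset.filter_val]
    refine congrArg _ (Multiset.filter_congr fun v hv => ?_)
    rw [Finset.mem_val, Finset.mem_Icc] at hv
    simp only [Function.comp_apply,
      pathLabelsAt_of_le (le_max_left _ _) (by omega : max 1 (v - a) ≤ n)]
    omega
  rw [stepLabels, hfilter, Finset.filter_eq']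
  split_ifs with hu <;> simp only [Finset.mem_Icc] at hu
  · simp only [Finset.singleton_val, Multiset.map_singleton, Multiset.fold_singleton,
      pathLabelsAt]
    split_ifs <;> omega
  · simp only [Finset.empty_val, Multiset.map_zero, Multiset.fold_zero, pathLabelsAt]
    split_ifs <;> omega

theorem lpStep_pathState (ha : 1 ≤ a) :
    lpStep (pathEdgesAt n a b, pathLabelsAt n b) =
      (pathEdgesAt n b (a + b), pathLabelsAt n (a + b)) :=
  Prod.ext (stepEdges_pathEdgesAt ha) (stepLabels_pathEdgesAt ha)

end PathState

theorem pathEdges_val (n : ℕ) : (pathEdges n).val = pathEdgesAt n 1 1 := by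
  have hIcc : (Finset.Icc 2 n).val = (Finset.Ico 1 n).val.map (· + 1) := by
    rw [← Finset.Ico_add_one_right_eq_Icc]
    exact (Multiset.map_add_right_Ico 1 n 1).symm
  have hdisj : Disjoint ((Finset.Ico 1 n).image fun i => (i, i + 1))
      ((Finset.Ico 1 n).image fun i => (i + 1, i)) := by
    simp only [Finset.disjoint_left, Finset.mem_image]
    rintro _ ⟨i, -, rfl⟩ ⟨j, -, hj⟩
    rw [Prod.mk.injEq] at hj
    omega
  rw [pathEdges, ← Finset.disjUnion_eq_union _ _ hdisj, Finset.disjUnion_val,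
    Finset.image_val_of_injOn fun i _ j _ h => (Prod.mk.inj h).1,
    Finset.image_val_of_injOn fun i _ j _ h => (Prod.mk.inj h).2,
    pathEdgesAt, hIcc, Multiset.map_map, Multiset.map_map]
  congr 1 <;> refine Multiset.map_congr rfl fun i hi => ?_ <;>
    simp only [Finset.mem_val, Finset.mem_Ico] at hi <;>
    simp only [Function.comp_apply, Prod.mk.injEq, and_true, true_and] <;> omega

theorem mem_pathEdges {n a b : ℕ} :
    (a, b) ∈ pathEdges n ↔ 1 ≤ a ∧ b = a + 1 ∧ b ≤ n ∨ 1 ≤ b ∧ a = b + 1 ∧ a ≤ n := by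
  simp only [pathEdges, Finset.mem_union, Finset.mem_image, Finset.mem_Ico, Prod.mk.injEq]
  constructor
  · rintro (⟨i, hi, rfl, rfl⟩ | ⟨i, hi, rfl, rfl⟩) <;> omega
  · rintro (⟨ha, rfl, hb⟩ | ⟨hb, rfl, ha⟩)
    · exact Or.inl ⟨a, by omega, rfl, rfl⟩
    · exact Or.inr ⟨b, by omega, rfl, rfl⟩

theorem initLabels_pathEdges (n : ℕ) : initLabels (pathEdges n) = pathLabelsAt n 1 := by
  funext v
  have hmem : ∀ w, w ∈ insert v (((pathEdges n).filter (·.1 = v)).image Prod.snd) ↔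
      w = v ∨ (v, w) ∈ pathEdges n := by
    intro w
    simp
  refine le_antisymm (Finset.min'_le _ _ ((hmem _).2 ?_)) (Finset.le_min' _ _ _ fun w hw => ?_)
  · rw [mem_pathEdges, pathLabelsAt]
    split_ifs <;> omega
  · rw [hmem, mem_pathEdges] at hw
    rw [pathLabelsAt]
    split_ifs <;> omega

theorem lpRun_pathEdges (n k : ℕ) :
    lpRun (pathEdges n) k =
      (pathEdgesAt n (Nat.fib (k + 1)) (Nat.fib (k + 2)), pathLabelsAt n (Nat.fib (k + 2))) := by
  induction k with
  | zero => rw [lpRun, Function.iterate_zero_apply, pathEdges_val, initLabels_pathEdges]; rfl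
  | succ k ih =>
    rw [lpRun, Function.iterate_succ_apply', ← lpRun, ih,
      lpStep_pathState (Nat.fib_pos.2 k.succ_pos), ← Nat.fib_add_two]

theorem lpRun_pathEdges_label_eq_one {n k v : ℕ} (hn : n ≤ Nat.fib (k + 2)) (hv : 1 ≤ v)
    (hvn : v ≤ n) : (lpRun (pathEdges n) k).2 v = 1 := by
  rw [lpRun_pathEdges]
  dsimp only
  rw [pathLabelsAt_of_le hv hvn]
  omega

theorem goldenRatio_pow_le_fib (k : ℕ) : φ ^ k ≤ Nat.fib (k + 2) := by
  refine le_of_mul_le_mul_left ?_ goldenRatio_pos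
  calc φ * φ ^ k = φ * Nat.fib (k + 1) + Nat.fib k := by
        rw [← pow_succ', goldenRatio_mul_fib_succ_add_fib]
    _ ≤ φ * Nat.fib (k + 1) + φ * Nat.fib k := by
        gcongr
        exact le_mul_of_one_le_left (Nat.cast_nonneg _) one_lt_goldenRatio.le
    _ = φ * Nat.fib (k + 2) := by rw [Nat.fib_add_two, Nat.cast_add, mul_add, add_comm]

/-- On the sequentially labeled path with `n` vertices the algorithm
converges (every vertex has label `1`) within `⌈log_φ n⌉ + O(1)` steps, where
`φ = (1+√5)/2` is the golden ratio; in particular convergence takes `O(log n)` steps. -/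
theorem lp_path_convergence_log :
    ∃ C : ℕ, ∀ n k : ℕ, 1 ≤ n →
      (⌈Real.logb ((1 + Real.sqrt 5) / 2) (n : ℝ)⌉.toNat + C ≤ k) →
      ∀ v : ℕ, 1 ≤ v → v ≤ n → (lpRun (pathEdges n) k).2 v = 1 := by
  refine ⟨0, fun n k hn hk v hv hvn => lpRun_pathEdges_label_eq_one ?_ hv hvn⟩
  have hlog : logb φ n ≤ k := by
    rw [add_zero, Int.toNat_le, Int.ceil_le] at hk
    exact_mod_cast hk
  rw [logb_le_iff_le_rpow one_lt_goldenRatio (by exact_mod_cast hn), rpow_natCast] at hlog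
  exact_mod_cast hlog.trans (goldenRatio_pow_le_fib k)
end
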